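/- arXiv:1804.06487 — 3 statements merged into one kernel-verified Lean document; each statement's English description precedes it below -/
import Mathlib

section
/- Let p₀, p₁, ..., pₙ be positive real numbers with p₁ > p₂ > ... > pₙ. Then the sum over i from 1 to n of p_{i-1} / (p₀ + p₁ + ... + pₙ - p_i) is strictly greater than 1. -/
/-! With `S = p 0 + ⋯ + p n`, the numerators `p 0, …, p (n-1)` add up to `S - p n`, the largest
denominator. Replacing every denominator by `S - p n` therefore gives exactly `1`; no term
grows under this replacement, and the term `i = 1` strictly shrinks because `p 1 > p n`. -/

open Finset

theorem Finset.sum_Icc_one_sub_one {M : Type*} [AddCommMonoid M] (f : ℕ → M) (n : ℕ) :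
    ∑ i ∈ Icc 1 n, f (i - 1) = ∑ i ∈ range n, f i := by
  rw [← Ico_add_one_right_eq_Icc, sum_Ico_eq_sum_range]
  simp only [add_tsub_cancel_right, add_tsub_cancel_left]

theorem single_lt_sum_range {M : Type*} [AddCommMonoid M] [PartialOrder M]
    [IsOrderedCancelAddMonoid M] {p : ℕ → M} {n i : ℕ} (hn : 1 ≤ n)
    (hpos : ∀ j ≤ n, 0 < p j) (hi : i ≤ n) : p i < ∑ j ∈ range (n + 1), p j := by
  -- any index other than `i` contributes a positive term
  set j := if i = 0 then 1 else 0
  have hj : j ≤ n := by unfold j; split <;> omega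
  have hji : j ≠ i := by unfold j; split <;> omega
  exact single_lt_sum hji (mem_range.2 (by omega)) (mem_range.2 (by omega)) (hpos j hj)
    fun k hk _ ↦ (hpos k (Nat.lt_succ_iff.1 (mem_range.1 hk))).le

theorem one_lt_sum_div_of_sum_eq {K ι : Type*} [Field K] [LinearOrder K] [IsStrictOrderedRing K]
    {s : Finset ι} {a d : ι → K} {D : K} (hsum : ∑ i ∈ s, a i = D)
    (ha : ∀ i ∈ s, 0 ≤ a i) (hd : ∀ i ∈ s, 0 < d i) (hdD : ∀ i ∈ s, d i ≤ D)
    (hlt : ∃ i ∈ s, 0 < a i ∧ d i < D) : 1 < ∑ i ∈ s, a i / d i := by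
  obtain ⟨i, hi, hai, hdi⟩ := hlt
  have hD : 0 < D := (hd i hi).trans hdi
  calc 1 = ∑ j ∈ s, a j / D := by rw [← sum_div, hsum, div_self hD.ne']
    _ < ∑ j ∈ s, a j / d j :=
      sum_lt_sum (fun j hj ↦ div_le_div_of_nonneg_left (ha j hj) (hd j hj) (hdD j hj))
        ⟨i, hi, div_lt_div_of_pos_left hai (hd i hi) hdi⟩

/-- For positive reals `p 0, …, p n` with `p 1 > p 2 > ⋯ > p n` and `n ≥ 2`,
`∑_{i=1}^n p (i-1) / (p 0 + ⋯ + p n - p i) > 1`. -/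
theorem key_inequality (n : ℕ) (hn : 2 ≤ n) (p : ℕ → ℝ)
    (hpos : ∀ i ≤ n, 0 < p i)
    (hanti : ∀ i j, 1 ≤ i → i < j → j ≤ n → p j < p i) :
    ∑ i ∈ Finset.Icc 1 n, p (i - 1) / ((∑ j ∈ Finset.range (n + 1), p j) - p i) > 1 := by
  have hden : ∀ i ≤ n, 0 < (∑ j ∈ range (n + 1), p j) - p i :=
    fun i hi ↦ sub_pos.2 (single_lt_sum_range (by omega) hpos hi)
  have hmin : ∀ i ∈ Icc 1 n, p n ≤ p i := by
    intro i hi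
    obtain ⟨hi1, hin⟩ := mem_Icc.1 hi
    rcases hin.lt_or_eq with hlt | rfl
    · exact (hanti i n hi1 hlt le_rfl).le
    · exact le_rfl
  refine one_lt_sum_div_of_sum_eq (D := (∑ j ∈ range (n + 1), p j) - p n) ?_ ?_ ?_ ?_ ?_
  · rw [sum_Icc_one_sub_one, sum_range_succ, add_sub_cancel_right]
  · exact fun i hi ↦ (hpos _ ((Nat.sub_le i 1).trans (mem_Icc.1 hi).2)).le
  · exact fun i hi ↦ hden i (mem_Icc.1 hi).2
  · exact fun i hi ↦ sub_le_sub_left (hmin i hi) _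
  · exact ⟨1, mem_Icc.2 ⟨le_rfl, by omega⟩, hpos 0 (by omega),
      sub_lt_sub_left (hanti 1 n le_rfl (by omega) le_rfl) _⟩
end

section
/- Two permutations σ, τ of {1, ..., n} have the same Lehmer code components c_{m+1}, ..., cₙ (for some m ∈ {1, ..., n-1}) if and only if for every j ∈ {m, m+1, ..., n}, the sets {σ⁻¹(1), ..., σ⁻¹(j)}-images {x_{σ⁻¹(1)}, ..., x_{σ⁻¹(j)}} and {x_{τ⁻¹(1)}, ..., x_{τ⁻¹(j)}} coincide for any injective assignment of distinct values x₁, ..., xₙ; equivalently, the chains of initial-segment preimage sets {σ⁻¹(1),...,σ⁻¹(j)} for j ≥ m agree. -/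
/-!
Write `S_j = {σ⁻¹ 0, …, σ⁻¹ (j-1)}`. Then `S_{k+1} = S_k ∪ {σ⁻¹ k}`, so the chain `(S_j)_{j ≥ m}`
determines `σ⁻¹ k` for every `k ≥ m`, and `c_k` is the rank of `σ⁻¹ k` inside `S_{k+1}`. Conversely,
starting from `S_n = univ` and going down, the rank `c_k` singles out `σ⁻¹ k` in the known set
`S_{k+1}`, and removing it gives `S_k`. An injective relabelling `x` of the positions changes nothing.
-/

/-- The Lehmer code (0-indexed): component `k` counts the `i < k` with `σ⁻¹ i < σ⁻¹ k`. -/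
def lehmerCode (n : ℕ) (σ : Equiv.Perm (Fin n)) (k : Fin n) : ℕ :=
  (Finset.univ.filter fun i : Fin n => i < k ∧ σ.symm i < σ.symm k).card

open Finset

theorem Finset.strictMonoOn_card_filter_lt {α : Type*} [LinearOrder α] (s : Finset α) :
    StrictMonoOn (fun x => #{y ∈ s | y < x}) s := by
  intro x hx x' _ hxx'
  refine card_lt_card ((ssubset_iff_of_subset ?_).2 ⟨x, ?_, ?_⟩)
  · exact monotone_filter_right s fun y _ hy => hy.trans hxx'
  · simp [Finset.mem_coe.1 hx, hxx']
  · simp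

theorem Set.image_comp_eq_image_comp_iff {α β γ : Type*} {x : β → γ} (hx : Function.Injective x)
    (f g : α → β) (s : Set α) :
    (fun i => x (f i)) '' s = (fun i => x (g i)) '' s ↔ f '' s = g '' s := by
  rw [← Set.image_image x f s, ← Set.image_image x g s]
  exact (Set.image_injective.2 hx).eq_iff

namespace Equiv.Perm

variable {n : ℕ}

def initPreimage (σ : Equiv.Perm (Fin n)) (j : ℕ) : Finset (Fin n) :=
  {p | (σ p : ℕ) < j}

variable {σ τ : Equiv.Perm (Fin n)}

@[simp]
theorem mem_initPreimage {j : ℕ} {p : Fin n} : p ∈ σ.initPreimage j ↔ (σ p : ℕ) < j := by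
  simp [initPreimage]

theorem coe_initPreimage (σ : Equiv.Perm (Fin n)) (j : ℕ) :
    (σ.initPreimage j : Set (Fin n)) = (fun i => σ.symm i) '' {i : Fin n | (i : ℕ) < j} := by
  ext p
  simp [σ.symm.image_eq_preimage_symm]

theorem initPreimage_of_le {j : ℕ} (hj : n ≤ j) : σ.initPreimage j = univ := by
  ext p
  simpa using (σ p).isLt.trans_le hj

theorem symm_notMem_initPreimage (k : Fin n) : σ.symm k ∉ σ.initPreimage k := by
  simp

theorem initPreimage_succ (k : Fin n) :
    σ.initPreimage (k + 1) = insert (σ.symm k) (σ.initPreimage k) := by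
  ext p
  rw [mem_insert, mem_initPreimage, mem_initPreimage, Nat.lt_succ_iff_lt_or_eq, or_comm,
    Fin.val_eq_val, eq_symm_apply]

theorem initPreimage_eq_erase (k : Fin n) :
    σ.initPreimage k = (σ.initPreimage (k + 1)).erase (σ.symm k) := by
  rw [initPreimage_succ, erase_insert (symm_notMem_initPreimage k)]

theorem lehmerCode_eq_card_filter (k : Fin n) :
    lehmerCode n σ k = #{p ∈ σ.initPreimage (k + 1) | p < σ.symm k} := by
  rw [initPreimage_succ, filter_insert, if_neg (lt_irrefl _), lehmerCode]
  refine card_equiv σ.symm fun i => ?_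
  simp

theorem symm_eq_of_initPreimage_eq {k : Fin n} (h : σ.initPreimage k = τ.initPreimage k)
    (hsucc : σ.initPreimage (k + 1) = τ.initPreimage (k + 1)) : σ.symm k = τ.symm k := by
  have hmem : σ.symm k ∈ insert (τ.symm k) (τ.initPreimage k) := by
    rw [← initPreimage_succ, ← hsucc, initPreimage_succ]
    exact mem_insert_self _ _
  rw [← h] at hmem
  exact (mem_insert.1 hmem).resolve_right (symm_notMem_initPreimage k)

theorem symm_eq_of_lehmerCode_eq {k : Fin n}
    (hsucc : σ.initPreimage (k + 1) = τ.initPreimage (k + 1))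
    (hcode : lehmerCode n σ k = lehmerCode n τ k) : σ.symm k = τ.symm k := by
  have hτ : τ.symm k ∈ σ.initPreimage (k + 1) := by
    rw [hsucc, initPreimage_succ]
    exact mem_insert_self _ _
  rw [lehmerCode_eq_card_filter, lehmerCode_eq_card_filter, ← hsucc] at hcode
  refine (σ.initPreimage (k + 1)).strictMonoOn_card_filter_lt.injOn ?_ hτ hcode
  rw [initPreimage_succ]
  exact mem_insert_self _ _

theorem lehmerCode_eq_of_initPreimage_eq {m : ℕ}
    (h : ∀ j, m ≤ j → j ≤ n → σ.initPreimage j = τ.initPreimage j) (k : Fin n) (hk : m ≤ k) :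
    lehmerCode n σ k = lehmerCode n τ k := by
  have hk' := h k hk k.isLt.le
  have hsucc := h (k + 1) (by omega) k.isLt
  rw [lehmerCode_eq_card_filter, lehmerCode_eq_card_filter, hsucc,
    symm_eq_of_initPreimage_eq hk' hsucc]

theorem initPreimage_eq_of_lehmerCode_eq {m : ℕ}
    (h : ∀ k : Fin n, m ≤ k → lehmerCode n σ k = lehmerCode n τ k) (j : ℕ) (hmj : m ≤ j)
    (hjn : j ≤ n) : σ.initPreimage j = τ.initPreimage j := by
  induction hjn using Nat.decreasingInduction with
  | self => rw [initPreimage_of_le le_rfl, initPreimage_of_le le_rfl]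
  | of_succ j hj ih =>
    let k : Fin n := ⟨j, hj⟩
    have hsucc : σ.initPreimage (k + 1) = τ.initPreimage (k + 1) := ih (by omega)
    rw [show j = k from rfl, initPreimage_eq_erase, initPreimage_eq_erase (σ := τ), hsucc,
      symm_eq_of_lehmerCode_eq hsucc (h k hmj)]

theorem lehmerCode_eq_iff_initPreimage_eq {m : ℕ} :
    (∀ k : Fin n, m ≤ k → lehmerCode n σ k = lehmerCode n τ k) ↔
      ∀ j, m ≤ j → j ≤ n → σ.initPreimage j = τ.initPreimage j :=
  ⟨initPreimage_eq_of_lehmerCode_eq, lehmerCode_eq_of_initPreimage_eq⟩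

end Equiv.Perm

theorem trailing_code_iff_chains_general (n m : ℕ)
    (σ τ : Equiv.Perm (Fin n)) :
    ((∀ k : Fin n, m ≤ (k : ℕ) → lehmerCode n σ k = lehmerCode n τ k) ↔
      (∀ x : Fin n → ℝ, Function.Injective x → ∀ j, m ≤ j → j ≤ n →
        (fun i => x (σ.symm i)) '' {i : Fin n | (i : ℕ) < j}
          = (fun i => x (τ.symm i)) '' {i : Fin n | (i : ℕ) < j})) ∧
    ((∀ x : Fin n → ℝ, Function.Injective x → ∀ j, m ≤ j → j ≤ n →
        (fun i => x (σ.symm i)) '' {i : Fin n | (i : ℕ) < j}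
          = (fun i => x (τ.symm i)) '' {i : Fin n | (i : ℕ) < j}) ↔
      (∀ j, m ≤ j → j ≤ n →
        (fun i => σ.symm i) '' {i : Fin n | (i : ℕ) < j}
          = (fun i => τ.symm i) '' {i : Fin n | (i : ℕ) < j})) := by
  have hval : Function.Injective fun i : Fin n => ((i : ℕ) : ℝ) :=
    Nat.cast_injective.comp Fin.val_injective
  have hvalues :
      (∀ x : Fin n → ℝ, Function.Injective x → ∀ j, m ≤ j → j ≤ n →
        (fun i => x (σ.symm i)) '' {i : Fin n | (i : ℕ) < j}
          = (fun i => x (τ.symm i)) '' {i : Fin n | (i : ℕ) < j}) ↔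
      (∀ j, m ≤ j → j ≤ n →
        (fun i => σ.symm i) '' {i : Fin n | (i : ℕ) < j}
          = (fun i => τ.symm i) '' {i : Fin n | (i : ℕ) < j}) :=
    ⟨fun h j hmj hjn => (Set.image_comp_eq_image_comp_iff hval _ _ _).1 (h _ hval j hmj hjn),
      fun h x hx j hmj hjn => (Set.image_comp_eq_image_comp_iff hx _ _ _).2 (h j hmj hjn)⟩
  refine ⟨?_, hvalues⟩
  rw [hvalues, Equiv.Perm.lehmerCode_eq_iff_initPreimage_eq]
  simp only [← Equiv.Perm.coe_initPreimage, Finset.coe_inj]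

/-- Two permutations share the trailing Lehmer-code components `c_{m+1}, …, c_n`
(0-indexed: components at indices `≥ m`) iff for every injective assignment of values
`x` the visible value-sets `{x_{σ⁻¹(1)}, …, x_{σ⁻¹(j)}}` agree for all `j ≥ m`, iff the
chains of initial-segment preimage sets `{σ⁻¹(1), …, σ⁻¹(j)}`, `j = m, …, n`, agree. -/
theorem trailing_code_iff_chains (n m : ℕ) (hm : 1 ≤ m) (hmn : m ≤ n - 1)
    (σ τ : Equiv.Perm (Fin n)) :
    ((∀ k : Fin n, m ≤ (k : ℕ) → lehmerCode n σ k = lehmerCode n τ k) ↔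
      (∀ x : Fin n → ℝ, Function.Injective x → ∀ j, m ≤ j → j ≤ n →
        (fun i => x (σ.symm i)) '' {i : Fin n | (i : ℕ) < j}
          = (fun i => x (τ.symm i)) '' {i : Fin n | (i : ℕ) < j})) ∧
    ((∀ x : Fin n → ℝ, Function.Injective x → ∀ j, m ≤ j → j ≤ n →
        (fun i => x (σ.symm i)) '' {i : Fin n | (i : ℕ) < j}
          = (fun i => x (τ.symm i)) '' {i : Fin n | (i : ℕ) < j}) ↔
      (∀ j, m ≤ j → j ≤ n →
        (fun i => σ.symm i) '' {i : Fin n | (i : ℕ) < j}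
          = (fun i => τ.symm i) '' {i : Fin n | (i : ℕ) < j})) :=
  trailing_code_iff_chains_general n m σ τ
end

section
/- Let n = 3 and x₁ > x₂ > x₃ be real numbers. Then Σ_{σ ∈ S₃} Π_{k=1}^{2} fₖ(x_{σ⁻¹(1)}, ..., x_{σ⁻¹(k)})(c_{k+1}) > 1, where (c₁, c₂, c₃) is the Lehmer code of σ, f₁(η) = softmax(0, η), and f₂(η₁, η₂) = softmax(0, max(η₁,η₂), min(η₁,η₂)). -/
/-- Stage-1 strategy: `softmax (0, η)` evaluated at coordinate `j ∈ {0, 1}`. -/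
noncomputable def f₁ (η : ℝ) (j : ℕ) : ℝ :=
  (if j = 0 then 1 else Real.exp η) / (1 + Real.exp η)

/-- Stage-2 strategy: `softmax (0, max η₁ η₂, min η₁ η₂)` at coordinate `j ∈ {0, 1, 2}`. -/
noncomputable def f₂ (η₁ η₂ : ℝ) (j : ℕ) : ℝ :=
  (if j = 0 then 1 else if j = 1 then Real.exp (max η₁ η₂) else Real.exp (min η₁ η₂)) /
    (1 + Real.exp (max η₁ η₂) + Real.exp (min η₁ η₂))

lemma e1' (a b : ℝ) (d1 : (0:ℝ) < 1+a) (d2 : (0:ℝ) < 1+b) (d4 : (0:ℝ) < 1+a+b) :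
    a * b / ((1 + a) * (1 + a + b)) + b / ((1 + b) * (1 + a + b)) =
      b / (1 + a + b) + b * (a - b) / ((1 + a) * (1 + b) * (1 + a + b)) := by
  field_simp; ring

lemma e2' (a c : ℝ) (d1 : (0:ℝ) < 1+a) (d3 : (0:ℝ) < 1+c) (d5 : (0:ℝ) < 1+a+c) :
    a * a / ((1 + a) * (1 + a + c)) + a / ((1 + c) * (1 + a + c)) =
      a / (1 + a + c) + a * (a - c) / ((1 + a) * (1 + c) * (1 + a + c)) := by
  field_simp; ring

lemma e3' (b c : ℝ) (d2 : (0:ℝ) < 1+b) (d3 : (0:ℝ) < 1+c) (d6 : (0:ℝ) < 1+b+c) :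
    b / ((1 + b) * (1 + b + c)) + 1 / ((1 + c) * (1 + b + c)) =
      1 / (1 + b + c) + (b - c) / ((1 + b) * (1 + c) * (1 + b + c)) := by
  field_simp; ring

lemma e4' (a b c : ℝ) (d4 : (0:ℝ) < 1+a+b) (d5 : (0:ℝ) < 1+a+c) (d6 : (0:ℝ) < 1+b+c) :
    b / (1 + a + b) + a / (1 + a + c) + 1 / (1 + b + c) - 1 =
      ((a - c) * (1 + a + c) + a * (b - c) * (1 + b + c)) /
        ((1 + a + b) * (1 + a + c) * (1 + b + c)) := by
  field_simp; ring

lemma key (a b c : ℝ) (hc : 0 < c) (hcb : c < b) (hba : b < a) :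
    a * b / ((1 + a) * (1 + a + b)) + a * a / ((1 + a) * (1 + a + c)) +
        b / ((1 + b) * (1 + a + b)) + b / ((1 + b) * (1 + b + c)) +
        a / ((1 + c) * (1 + a + c)) + 1 / ((1 + c) * (1 + b + c)) > 1 := by
  have hb : 0 < b := hc.trans hcb
  have ha : 0 < a := hb.trans hba
  have d1 : (0:ℝ) < 1 + a := by linarith
  have d2 : (0:ℝ) < 1 + b := by linarith
  have d3 : (0:ℝ) < 1 + c := by linarith
  have d4 : (0:ℝ) < 1 + a + b := by linarith
  have d5 : (0:ℝ) < 1 + a + c := by linarith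
  have d6 : (0:ℝ) < 1 + b + c := by linarith
  have e1 := e1' a b d1 d2 d4
  have e2 := e2' a c d1 d3 d5
  have e3 := e3' b c d2 d3 d6
  have e4 := e4' a b c d4 d5 d6
  have p1 : 0 < b * (a - b) / ((1 + a) * (1 + b) * (1 + a + b)) :=
    div_pos (mul_pos hb (by linarith)) (by positivity)
  have p2 : 0 < a * (a - c) / ((1 + a) * (1 + c) * (1 + a + c)) :=
    div_pos (mul_pos ha (by linarith)) (by positivity)
  have p3 : 0 < (b - c) / ((1 + b) * (1 + c) * (1 + b + c)) :=
    div_pos (by linarith) (by positivity)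
  have p4 : 0 < ((a - c) * (1 + a + c) + a * (b - c) * (1 + b + c)) /
      ((1 + a + b) * (1 + a + c) * (1 + b + c)) := by
    apply div_pos _ (by positivity)
    have h1 : 0 < (a - c) * (1 + a + c) := mul_pos (by linarith) d5
    have h2 : 0 < a * (b - c) * (1 + b + c) := mul_pos (mul_pos ha (by linarith)) d6
    linarith
  linarith

/-- The case `n = 3` of the main theorem: for `x 0 > x 1 > x 2`,
`∑_{σ ∈ S₃} f₁(x_{σ⁻¹(1)})(c₂) · f₂(x_{σ⁻¹(1)}, x_{σ⁻¹(2)})(c₃) > 1`,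
where `(c₁, c₂, c₃)` is the Lehmer code of `σ` (here 0-indexed). -/
theorem main_theorem_three (x : Fin 3 → ℝ) (h01 : x 1 < x 0) (h12 : x 2 < x 1) :
    ∑ σ : Equiv.Perm (Fin 3),
        f₁ (x (σ.symm 0)) (lehmerCode 3 σ 1) *
          f₂ (x (σ.symm 0)) (x (σ.symm 1)) (lehmerCode 3 σ 2) > 1 := by
  have h02 : x 2 < x 0 := h12.trans h01
  rw [show (Finset.univ : Finset (Equiv.Perm (Fin 3))) =
      {1, Equiv.swap 0 1, Equiv.swap 0 2, Equiv.swap 1 2,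
        Equiv.swap 0 1 * Equiv.swap 1 2, Equiv.swap 1 2 * Equiv.swap 0 1} from by decide]
  rw [Finset.sum_insert (by decide), Finset.sum_insert (by decide),
    Finset.sum_insert (by decide), Finset.sum_insert (by decide),
    Finset.sum_insert (by decide), Finset.sum_singleton]
  rw [show ((1 : Equiv.Perm (Fin 3)).symm 0) = 0 from by decide,
    show ((1 : Equiv.Perm (Fin 3)).symm 1) = 1 from by decide,
    show ((Equiv.swap 0 1 : Equiv.Perm (Fin 3)).symm 0) = 1 from by decide,
    show ((Equiv.swap 0 1 : Equiv.Perm (Fin 3)).symm 1) = 0 from by decide,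
    show ((Equiv.swap 0 2 : Equiv.Perm (Fin 3)).symm 0) = 2 from by decide,
    show ((Equiv.swap 0 2 : Equiv.Perm (Fin 3)).symm 1) = 1 from by decide,
    show ((Equiv.swap 1 2 : Equiv.Perm (Fin 3)).symm 0) = 0 from by decide,
    show ((Equiv.swap 1 2 : Equiv.Perm (Fin 3)).symm 1) = 2 from by decide,
    show ((Equiv.swap 0 1 * Equiv.swap 1 2 : Equiv.Perm (Fin 3)).symm 0) = 2 from by decide,
    show ((Equiv.swap 0 1 * Equiv.swap 1 2 : Equiv.Perm (Fin 3)).symm 1) = 0 from by decide,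
    show ((Equiv.swap 1 2 * Equiv.swap 0 1 : Equiv.Perm (Fin 3)).symm 0) = 1 from by decide,
    show ((Equiv.swap 1 2 * Equiv.swap 0 1 : Equiv.Perm (Fin 3)).symm 1) = 2 from by decide,
    show lehmerCode 3 1 1 = 1 from by decide,
    show lehmerCode 3 1 2 = 2 from by decide,
    show lehmerCode 3 (Equiv.swap 0 1) 1 = 0 from by decide,
    show lehmerCode 3 (Equiv.swap 0 1) 2 = 2 from by decide,
    show lehmerCode 3 (Equiv.swap 0 2) 1 = 0 from by decide,
    show lehmerCode 3 (Equiv.swap 0 2) 2 = 0 from by decide,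
    show lehmerCode 3 (Equiv.swap 1 2) 1 = 1 from by decide,
    show lehmerCode 3 (Equiv.swap 1 2) 2 = 1 from by decide,
    show lehmerCode 3 (Equiv.swap 0 1 * Equiv.swap 1 2) 1 = 0 from by decide,
    show lehmerCode 3 (Equiv.swap 0 1 * Equiv.swap 1 2) 2 = 1 from by decide,
    show lehmerCode 3 (Equiv.swap 1 2 * Equiv.swap 0 1) 1 = 1 from by decide,
    show lehmerCode 3 (Equiv.swap 1 2 * Equiv.swap 0 1) 2 = 0 from by decide]
  simp only [f₁, f₂]
  norm_num
  simp only [max_eq_left h01.le, max_eq_right h01.le, min_eq_right h01.le, min_eq_left h01.le,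
    max_eq_left h02.le, max_eq_right h02.le, min_eq_right h02.le, min_eq_left h02.le,
    max_eq_left h12.le, max_eq_right h12.le, min_eq_right h12.le, min_eq_left h12.le]
  set a := Real.exp (x 0)
  set b := Real.exp (x 1)
  set c := Real.exp (x 2)
  have hk := key a b c (Real.exp_pos _) (Real.exp_lt_exp.2 h12) (Real.exp_lt_exp.2 h01)
  refine lt_of_lt_of_eq hk ?_
  simp only [div_eq_mul_inv, mul_inv]
  ring
end
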